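/- arXiv:1506.05815 — 5 statements merged into one kernel-verified Lean document; each statement's English description precedes it below -/
import Mathlib

section
/- If 0 ≤ σ₊ < σ₋ and t > 0, then |g^σ(t)|²·(|z^σ(t)|² + |w^σ(t)|²) < 1, where g^σ(t) := e^{it(E_σ-ε)/2} with E_σ = E + i(σ₋-σ₊)/2. -/
/-!
The pair `(u₁, u₂) = (g z, g w)` solves the Schrödinger-type equation `u' = i H u` with
`H = [[a, η], [η, 0]]`, `a = Eσ - ε`. Since `H - H* = 2i·Im a·e₁e₁*`, the squared norm of `u`
has derivative `-2 Im a ‖u₁‖² ≤ 0`, so it is non-increasing; it strictly drops right after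
`t = 0`, where `u = (1, 0)` and `Im a = (σ₋ - σ₊)/2 > 0`.
-/

open Complex Filter Set Topology

theorem Antitone.lt_of_hasDerivAt_neg {f : ℝ → ℝ} {f' x t : ℝ} (hanti : Antitone f)
    (hf : HasDerivAt f f' x) (hf' : f' < 0) (hxt : x < t) : f t < f x := by
  have hslope : ∀ᶠ s in 𝓝[>] x, slope f x s < 0 :=
    (hasDerivAt_iff_tendsto_slope.mp hf).eventually_lt_const hf'
      |>.filter_mono (nhdsWithin_mono x fun _ hs => ne_of_gt hs)
  obtain ⟨s, hs, hst⟩ := (hslope.and (Ioc_mem_nhdsGT hxt)).exists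
  calc f t ≤ f s := hanti hst.2
    _ < f x := (slope_neg_iff_of_le hst.1.le).mp hs

section Dissipation

variable {u₁ u₂ : ℝ → ℂ} {a : ℂ} {b : ℝ}

theorem hasDerivAt_norm_sq_add_norm_sq
    (h₁ : ∀ s, HasDerivAt u₁ (I * (a * u₁ s + b * u₂ s)) s)
    (h₂ : ∀ s, HasDerivAt u₂ (I * (b * u₁ s)) s) (x : ℝ) :
    HasDerivAt (fun s => ‖u₁ s‖ ^ 2 + ‖u₂ s‖ ^ 2) (-2 * a.im * ‖u₁ x‖ ^ 2) x := by
  refine ((h₁ x).norm_sq.add (h₂ x).norm_sq).congr_deriv ?_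
  simp only [Complex.inner, Complex.sq_norm, normSq_apply, mul_re, mul_im, add_re, add_im, I_re,
    I_im, conj_re, conj_im, ofReal_re, ofReal_im]
  ring

theorem norm_sq_add_norm_sq_lt
    (h₁ : ∀ s, HasDerivAt u₁ (I * (a * u₁ s + b * u₂ s)) s)
    (h₂ : ∀ s, HasDerivAt u₂ (I * (b * u₁ s)) s) (ha : 0 < a.im) {x t : ℝ} (hx : u₁ x ≠ 0)
    (hxt : x < t) : ‖u₁ t‖ ^ 2 + ‖u₂ t‖ ^ 2 < ‖u₁ x‖ ^ 2 + ‖u₂ x‖ ^ 2 := by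
  have hderiv := hasDerivAt_norm_sq_add_norm_sq h₁ h₂
  have hanti : Antitone fun s => ‖u₁ s‖ ^ 2 + ‖u₂ s‖ ^ 2 :=
    antitone_of_deriv_nonpos (fun s => (hderiv s).differentiableAt) fun s => by
      rw [(hderiv s).deriv]
      have := norm_nonneg (u₁ s)
      nlinarith
  refine hanti.lt_of_hasDerivAt_neg (hderiv x) ?_ hxt
  have := mul_pos ha (pow_pos (norm_pos_iff.mpr hx) 2)
  linarith

end Dissipation

/-- `gz (Eσ - ε) ν` and `gw (Eσ - ε) η ν` are the products `g^σ z^σ` and `g^σ w^σ`. -/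
noncomputable def gz (a ν s : ℂ) : ℂ :=
  exp (I * s * a / 2) * (cos (s * ν) + I * a / (2 * ν) * sin (s * ν))

noncomputable def gw (a b ν s : ℂ) : ℂ :=
  exp (I * s * a / 2) * ((2 * I * b) / (2 * ν) * sin (s * ν))

section Solution

variable {a b ν : ℂ}

theorem hasDerivAt_exp_I_mul_mul_div_two (a s : ℂ) :
    HasDerivAt (fun y => exp (I * y * a / 2)) (exp (I * s * a / 2) * (I * a / 2)) s := by
  simpa using ((((hasDerivAt_id s).const_mul I).mul_const a).div_const 2).cexp

theorem hasDerivAt_sin_mul_const (ν s : ℂ) :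
    HasDerivAt (fun y => sin (y * ν)) (cos (s * ν) * ν) s := by
  simpa using ((hasDerivAt_id s).mul_const ν).csin

theorem hasDerivAt_cos_mul_const (ν s : ℂ) :
    HasDerivAt (fun y => cos (y * ν)) (-sin (s * ν) * ν) s := by
  simpa using ((hasDerivAt_id s).mul_const ν).ccos

theorem hasDerivAt_gz (hν : ν ^ 2 = a ^ 2 / 4 + b ^ 2) (hν0 : ν ≠ 0) (s : ℂ) :
    HasDerivAt (gz a ν) (I * (a * gz a ν s + b * gw a b ν s)) s := by
  refine ((hasDerivAt_exp_I_mul_mul_div_two a s).mul ((hasDerivAt_cos_mul_const ν s).add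
    ((hasDerivAt_sin_mul_const ν s).const_mul (I * a / (2 * ν))))).congr_deriv ?_
  simp only [gz, gw, Pi.add_apply]
  field_simp
  linear_combination -4 * sin (s * ν) * hν - (a ^ 2 + 4 * b ^ 2) * sin (s * ν) * I_sq

theorem hasDerivAt_gw (hν0 : ν ≠ 0) (s : ℂ) :
    HasDerivAt (gw a b ν) (I * (b * gz a ν s)) s := by
  refine ((hasDerivAt_exp_I_mul_mul_div_two a s).mul
    ((hasDerivAt_sin_mul_const ν s).const_mul (2 * I * b / (2 * ν)))).congr_deriv ?_
  simp only [gz]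
  field_simp
  ring

end Solution

theorem gzw_contraction_general (E ε η σp σm : ℝ)
    (hσσ : σp < σm)
    (Eσ : ℂ) (hEσ : Eσ = (E : ℂ) + Complex.I * ((σm : ℂ) - σp) / 2)
    (ν : ℂ) (hν : ν ^ 2 = (Eσ - ε) ^ 2 / 4 + (η : ℂ) ^ 2) (hν0 : ν ≠ 0)
    (g z w : ℂ → ℂ)
    (hg : ∀ s : ℂ, g s = Complex.exp (Complex.I * s * (Eσ - ε) / 2))
    (hz : ∀ s : ℂ, z s = Complex.cos (s * ν)
        + Complex.I * (Eσ - ε) / (2 * ν) * Complex.sin (s * ν))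
    (hw : ∀ s : ℂ, w s = (2 * Complex.I * η) / (2 * ν) * Complex.sin (s * ν))
    (t : ℝ) (ht : 0 < t) :
    ‖g (t : ℂ)‖ ^ 2 * (‖z (t : ℂ)‖ ^ 2 + ‖w (t : ℂ)‖ ^ 2) < 1 := by
  have him : (Eσ - ε).im = (σm - σp) / 2 := by simp [hEσ]
  have hdecay := norm_sq_add_norm_sq_lt (u₁ := fun s : ℝ => gz (Eσ - ε) ν s)
    (u₂ := fun s : ℝ => gw (Eσ - ε) η ν s)
    (fun s => (hasDerivAt_gz hν hν0 s).comp_ofReal) (fun s => (hasDerivAt_gw hν0 s).comp_ofReal)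
    (by rw [him]; linarith) (by simp [gz]) ht
  rw [hg, hz, hw, mul_add, ← mul_pow, ← mul_pow, ← norm_mul, ← norm_mul]
  simpa [gz, gw] using hdecay

/-- if `0 ≤ σ₊ < σ₋` and `t > 0`, then
`|g^σ(t)|²·(|z^σ(t)|² + |w^σ(t)|²) < 1`, where `g^σ(t) = exp(it(Eσ-ε)/2)`,
`Eσ = E + i(σ₋-σ₊)/2`, and `z^σ, w^σ` are as in the repeated-interaction model. -/
theorem gzw_contraction (E ε η σp σm : ℝ) (hE : 0 < E) (hε : 0 < ε) (hη : 0 < η)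
    (hσ : 0 ≤ σp) (hσσ : σp < σm)
    (Eσ : ℂ) (hEσ : Eσ = (E : ℂ) + Complex.I * ((σm : ℂ) - σp) / 2)
    (ν : ℂ) (hν : ν ^ 2 = (Eσ - ε) ^ 2 / 4 + (η : ℂ) ^ 2) (hν0 : ν ≠ 0)
    (g z w : ℂ → ℂ)
    (hg : ∀ s : ℂ, g s = Complex.exp (Complex.I * s * (Eσ - ε) / 2))
    (hz : ∀ s : ℂ, z s = Complex.cos (s * ν)
        + Complex.I * (Eσ - ε) / (2 * ν) * Complex.sin (s * ν))
    (hw : ∀ s : ℂ, w s = (2 * Complex.I * η) / (2 * ν) * Complex.sin (s * ν))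
    (t : ℝ) (ht : 0 < t) :
    ‖g (t : ℂ)‖ ^ 2 * (‖z (t : ℂ)‖ ^ 2 + ‖w (t : ℂ)‖ ^ 2) < 1 :=
  gzw_contraction_general E ε η σp σm hσσ Eσ hEσ ν hν hν0 g z w hg hz hw t ht
end

section
/- The Gaussian characteristic function E(θ) = exp(−(|θ|²/4)·c) with c ≥ 1 is positive definite in the Weyl/CCR sense: for every finite family θ₁,…,θ_K ∈ ℂ and z₁,…,z_K ∈ ℂ, one has Σ_{k,k'} conj(z_k)·z_{k'} · exp(−i·Im(conj(θ_k)·θ_{k'})/2) · E(θ_k − θ_{k'}) ≥ 0 (the double sum is real and nonnegative). -/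
/-!
Writing `w = conj θ * θ'`, the twisted Gaussian kernel factors as
`exp (-c‖θ‖²/4) * exp (-c‖θ'‖²/4) * exp (θ * conj θ' / 2 + (c - 1)/2 * Re w)`.
The exponent is a positive semidefinite matrix when `c ≥ 1` (a rank-one Gram matrix plus a
nonnegative multiple of the real Gram matrix of the points in `ℝ²`), the entrywise exponential
of a positive semidefinite matrix is positive semidefinite by the Schur product theorem applied
to its power series, and the diagonal Gaussian factors are absorbed into the vector `z`.
-/

open Complex Matrix
open scoped ComplexOrder ComplexConjugate

lemma Matrix.star_dotProduct_mulVec_eq_sum {ι R : Type*} [Fintype ι] [CommSemiring R]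
    [StarRing R] (M : Matrix ι ι R) (x : ι → R) :
    star x ⬝ᵥ (M *ᵥ x) = ∑ i, ∑ j, star (x i) * M i j * x j := by
  simp [dotProduct, mulVec, Finset.mul_sum, mul_assoc]

lemma Matrix.PosSemidef.map_pow {ι 𝕜 : Type*} [Finite ι] [RCLike 𝕜] {A : Matrix ι ι 𝕜}
    (hA : A.PosSemidef) (n : ℕ) : (A.map (· ^ n)).PosSemidef := by
  induction n with
  | zero =>
    have hone : A.map (· ^ 0) = vecMulVec 1 (star 1) := by ext; simp [vecMulVec]
    exact hone ▸ posSemidef_vecMulVec_self_star 1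
  | succ n ih =>
    have hsucc : A.map (· ^ (n + 1)) = A.map (· ^ n) ⊙ A := by ext; simp [pow_succ]
    exact hsucc ▸ ih.hadamard hA

lemma Matrix.PosSemidef.map_exp {ι : Type*} [Fintype ι] {A : Matrix ι ι ℂ}
    (hA : A.PosSemidef) : (A.map exp).PosSemidef := by
  refine .of_dotProduct_mulVec_nonneg (hA.isHermitian.map _ fun z ↦ Complex.exp_conj z) fun x ↦ ?_
  have hsum : HasSum (fun n : ℕ ↦ (n.factorial : ℂ)⁻¹ * (star x ⬝ᵥ (A.map (· ^ n) *ᵥ x)))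
      (star x ⬝ᵥ (A.map exp *ᵥ x)) := by
    simp only [star_dotProduct_mulVec_eq_sum, Finset.mul_sum, map_apply]
    refine hasSum_sum fun i _ ↦ hasSum_sum fun j _ ↦ ?_
    have hexp := ((NormedSpace.expSeries_div_hasSum_exp (A i j)).mul_left (star (x i))).mul_right
      (x j)
    rw [← exp_eq_exp_ℂ] at hexp
    exact hexp.congr_fun fun n ↦ by ring
  exact hsum.nonneg fun n ↦ mul_nonneg (by positivity) ((hA.map_pow n).dotProduct_mulVec_nonneg x)

noncomputable def weylGaussianExponent {ι : Type*} (s : ℝ) (θ : ι → ℂ) : Matrix ι ι ℂ :=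
  Matrix.of fun k k' ↦ θ k * conj (θ k') / 2 + s * (conj (θ k) * θ k').re

lemma posSemidef_weylGaussianExponent {ι : Type*} [Finite ι] {s : ℝ} (hs : 0 ≤ s)
    (θ : ι → ℂ) : (weylGaussianExponent s θ).PosSemidef := by
  have hθ := posSemidef_vecMulVec_self_star θ
  have hre := posSemidef_vecMulVec_self_star fun k ↦ ((θ k).re : ℂ)
  have him := posSemidef_vecMulVec_self_star fun k ↦ ((θ k).im : ℂ)
  convert (hθ.smul (show (0 : ℝ) ≤ 1 / 2 by norm_num)).add ((hre.add him).smul hs) using 1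
  ext k k'
  simp only [weylGaussianExponent, vecMulVec_apply, of_apply, Matrix.add_apply,
    Matrix.smul_apply, Pi.star_apply, RCLike.star_def, conj_ofReal, real_smul, mul_re, conj_re,
    conj_im]
  push_cast
  ring

lemma exp_twist_mul_exp_neg_norm_sub_sq (c : ℝ) (θ θ' : ℂ) :
    exp (-I * ((conj θ * θ').im : ℝ) / 2) * exp (-(c * ‖θ - θ'‖ ^ 2 / 4 : ℝ))
      = (Real.exp (-(c * ‖θ‖ ^ 2 / 4)) : ℂ) * (Real.exp (-(c * ‖θ'‖ ^ 2 / 4)) : ℂ)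
        * exp (θ * conj θ' / 2 + ((c - 1) / 2 : ℝ) * (conj θ * θ').re) := by
  have hw : conj θ * θ' = conj (θ * conj θ') := by simp [mul_comm]
  have hconj : θ * conj θ' = (conj θ * θ').re - (conj θ * θ').im * I := by
    rw [hw, conj_re, conj_im, ofReal_neg, neg_mul, sub_neg_eq_add, re_add_im]
  have hnorm : ‖θ - θ'‖ ^ 2 = ‖θ‖ ^ 2 + ‖θ'‖ ^ 2 - 2 * (conj θ * θ').re := by
    simp only [Complex.sq_norm, normSq_sub, hw, conj_re]
  rw [hconj, hnorm]
  simp only [ofReal_exp, ← exp_add]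
  push_cast
  congr 1
  ring

/-- the Gaussian characteristic function `E(θ) = exp(−c|θ|²/4)` with
`c ≥ 1` is positive definite in the twisted (Weyl/CCR) sense. -/
theorem gaussian_twisted_posdef (c : ℝ) (hc : 1 ≤ c)
    (E : ℂ → ℂ) (hE : ∀ θ : ℂ, E θ = Complex.exp (-(c * ‖θ‖ ^ 2 / 4 : ℝ)))
    (K : ℕ) (θ z : Fin K → ℂ) :
    (∑ k : Fin K, ∑ k' : Fin K,
        (starRingEnd ℂ) (z k) * z k'
          * Complex.exp (-Complex.I * ((((starRingEnd ℂ) (θ k) * θ k').im : ℝ)) / 2)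
          * E (θ k - θ k')).im = 0
    ∧ 0 ≤ (∑ k : Fin K, ∑ k' : Fin K,
        (starRingEnd ℂ) (z k) * z k'
          * Complex.exp (-Complex.I * ((((starRingEnd ℂ) (θ k) * θ k').im : ℝ)) / 2)
          * E (θ k - θ k')).re := by
  set w : Fin K → ℂ := fun k ↦ (Real.exp (-(c * ‖θ k‖ ^ 2 / 4)) : ℂ) * z k
  have hsum : (∑ k : Fin K, ∑ k' : Fin K,
      conj (z k) * z k' * exp (-I * ((conj (θ k) * θ k').im : ℝ) / 2) * E (θ k - θ k'))
      = star w ⬝ᵥ ((weylGaussianExponent ((c - 1) / 2) θ).map exp *ᵥ w) := by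
    rw [star_dotProduct_mulVec_eq_sum]
    refine Finset.sum_congr rfl fun k _ ↦ Finset.sum_congr rfl fun k' _ ↦ ?_
    rw [mul_assoc, hE, exp_twist_mul_exp_neg_norm_sub_sq]
    simp only [w, weylGaussianExponent, map_apply, of_apply, star_mul', Complex.star_def,
      conj_ofReal]
    ring
  have hexponent : (weylGaussianExponent ((c - 1) / 2) θ).PosSemidef :=
    posSemidef_weylGaussianExponent (by linarith) θ
  have hnonneg := hexponent.map_exp.dotProduct_mulVec_nonneg w
  rw [← hsum, Complex.nonneg_iff] at hnonneg
  exact ⟨hnonneg.2.symm, hnonneg.1⟩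
end

section
/- Intertwining of embedding with one-step evolution matrices: for the (m+2)×(m+2) matrix U_{ℓ+1}^{σ(m+1)} and the (m+1)×(m+1) matrix U_ℓ^{σ(m)}, and the embedding r_{m+1,m} : ℂ^{m+1} → ℂ^{m+2} inserting a zero at position 1, one has U_{ℓ+1}^{σ(m+1)} ∘ r_{m+1,m} = r_{m+1,m} ∘ U_ℓ^{σ(m)} for all 1 ≤ ℓ ≤ m. -/
/-!
The embedding `r_{m+1,m}` puts a `0` in slot `1` and shifts every other slot `j ≥ 1` to `j + 1`.
On the new slot `1` the matrix `U_{ℓ+1}^{σ(m+1)}` acts as multiplication by `c`, which keeps the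
`0`, and it couples slots `0` and `ℓ + 1` exactly as `U_ℓ^{σ(m)}` couples slots `0` and `ℓ`; every
other slot is scaled by `c` on both sides.
-/

/-- The one-step evolution matrix `U_ℓ^{σ(k)}` of size `(k+1)×(k+1)`:
row 0 is `c·g·(z⁺δ_{j0} + wδ_{jℓ})`, row `ℓ` is `c·g·(wδ_{j0} + z⁻δ_{jℓ})`,
all other rows are `c·δ_{ij}`. -/
def Umat (k ℓ : ℕ) (c g w zp zm : ℂ) : Matrix (Fin (k + 1)) (Fin (k + 1)) ℂ :=
  fun i j =>
    if (i : ℕ) = 0 then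
      c * g * ((if (j : ℕ) = 0 then zp else 0) + (if (j : ℕ) = ℓ then w else 0))
    else if (i : ℕ) = ℓ then
      c * g * ((if (j : ℕ) = 0 then w else 0) + (if (j : ℕ) = ℓ then zm else 0))
    else if i = j then c else 0

/-- The embedding `r_{m+1,m} : ℂ^{m+1} → ℂ^{m+2}` inserting a `0` at position 1. -/
def remb (m : ℕ) (ζ : Fin (m + 1) → ℂ) : Fin (m + 2) → ℂ :=
  Fin.cons (ζ 0) (Fin.cons 0 (Fin.tail ζ))

open Matrix

section
variable {k l : ℕ} {c g w zp zm : ℂ}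

lemma Umat_mulVec_apply (hl : l ≤ k) (v : Fin (k + 1) → ℂ) (i : Fin (k + 1)) :
    (Umat k l c g w zp zm *ᵥ v) i =
      if (i : ℕ) = 0 then c * g * (zp * v 0 + w * v ⟨l, by omega⟩)
      else if (i : ℕ) = l then c * g * (w * v 0 + zm * v ⟨l, by omega⟩)
      else c * v i := by
  have hval : ∀ j : Fin (k + 1), (j : ℕ) = l ↔ j = ⟨l, by omega⟩ := fun j =>
    ⟨fun h => Fin.ext h, fun h => h ▸ rfl⟩
  simp only [Matrix.mulVec, dotProduct, Umat, Fin.val_eq_zero_iff, hval]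
  split_ifs <;> simp [add_mul, ite_mul, Finset.sum_add_distrib, mul_add, mul_assoc]

end

section
variable {m : ℕ} (ζ : Fin (m + 1) → ℂ)

@[simp] lemma remb_apply_zero : remb m ζ 0 = ζ 0 := rfl

@[simp] lemma remb_apply_one : remb m ζ 1 = 0 := rfl

lemma remb_apply_of_one_lt (i : Fin (m + 2)) (hi : 1 < (i : ℕ)) :
    remb m ζ i = ζ ⟨i - 1, by omega⟩ := by
  obtain ⟨n, hn⟩ := i
  obtain ⟨n, rfl⟩ : ∃ j, n = j + 2 := ⟨n - 2, by simp at hi; omega⟩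
  exact congrArg ζ (Fin.ext rfl)

end

/-- `U_{ℓ+1}^{σ(m+1)} ∘ r_{m+1,m} = r_{m+1,m} ∘ U_ℓ^{σ(m)}` for `1 ≤ ℓ ≤ m`. -/
theorem Umat_remb_intertwine (m ℓ : ℕ) (h1 : 1 ≤ ℓ) (h2 : ℓ ≤ m)
    (c g w zp zm : ℂ) (ζ : Fin (m + 1) → ℂ) :
    Matrix.mulVec (Umat (m + 1) (ℓ + 1) c g w zp zm) (remb m ζ)
      = remb m (Matrix.mulVec (Umat m ℓ c g w zp zm) ζ) := by
  have hζℓ : remb m ζ ⟨ℓ + 1, by omega⟩ = ζ ⟨ℓ, by omega⟩ :=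
    remb_apply_of_one_lt ζ _ (by simp; omega)
  funext i
  rw [Umat_mulVec_apply (by omega), hζℓ]
  rcases (by omega : (i : ℕ) = 0 ∨ (i : ℕ) = 1 ∨ 1 < (i : ℕ)) with hi | hi | hi
  · obtain rfl : i = 0 := Fin.ext hi
    simp [Umat_mulVec_apply h2]
  · obtain rfl : i = 1 := Fin.ext hi
    simp [show ℓ ≠ 0 by omega]
  · rw [remb_apply_of_one_lt _ _ hi, remb_apply_of_one_lt _ _ hi, Umat_mulVec_apply h2]
    simp only [show (i : ℕ) ≠ 0 by omega, show (i : ℕ) - 1 ≠ 0 by omega,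
      show (i : ℕ) = ℓ + 1 ↔ (i : ℕ) - 1 = ℓ by omega, if_false,
      remb_apply_zero]
end

section
/- One-step stationarity of the limiting characteristic function: let q = c·g·z and p = c·g·w with |gz| < 1, κ := (σ₋+σ₊)/(σ₋−σ₊) > 0, and let F₁ : ℂ → ℂ be such that D(θ) := ∏_{s=0}^∞ F₁((gz)^s θ) converges. Define E_*(θ) := exp[−(|θ|²/4)·κ·(1 − |gw|²/(1−|gz|²))] · D(gw·θ). Then for all θ ∈ ℂ: exp[−(κ/4)(|θ|² − |gzθ|² − |gwθ|²)] · E_*(qθ) · F₁(pθ) = E_*(e^{i arg c}·θ) whenever |c| = 1 and F₁ depends only on |θ| (F₁ is rotation invariant). -/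
/-!
Since `|c| = 1`, `e^{i arg c} = c`, so the right side is `E_*(cθ)`. Unrolling one factor of the
infinite product gives `D τ = F₁ τ * D (g z τ)`; at `τ = g w c θ` this absorbs the factor `F₁ (p θ)`
and turns `D (g w · q θ)` into `D (g w · c θ)`. What remains is the Gaussian prefactor, where the
exponents add up because `1 - |gz|² - |gw|² + |gz|² (1 - |gw|²/(1 - |gz|²)) = 1 - |gw|²/(1 - |gz|²)`.
-/

open Filter Finset Topology

section InfiniteProduct

variable {M : Type*} [CommMonoid M] [TopologicalSpace M] [ContinuousMul M] [T2Space M]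

theorem eq_mul_of_tendsto_prod_range {f : ℕ → M} {L L' : M}
    (h : Tendsto (fun n => ∏ i ∈ range n, f i) atTop (𝓝 L))
    (h' : Tendsto (fun n => ∏ i ∈ range n, f (i + 1)) atTop (𝓝 L')) :
    L = f 0 * L' := by
  have hshift : Tendsto (fun n => ∏ i ∈ range (n + 1), f i) atTop (𝓝 L) :=
    h.comp (tendsto_add_atTop_nat 1)
  refine tendsto_nhds_unique hshift ?_
  simp only [prod_range_succ', mul_comm _ (f 0)]
  exact h'.const_mul (f 0)

theorem eq_mul_of_tendsto_prod_range_pow_mul {R : Type*} [Monoid R] {f D : R → M} {r x : R}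
    (hx : Tendsto (fun n => ∏ s ∈ range n, f (r ^ s * x)) atTop (𝓝 (D x)))
    (hrx : Tendsto (fun n => ∏ s ∈ range n, f (r ^ s * (r * x))) atTop (𝓝 (D (r * x)))) :
    D x = f x * D (r * x) := by
  simpa using eq_mul_of_tendsto_prod_range (f := fun s => f (r ^ s * x)) hx
    (by simpa only [pow_succ, mul_assoc] using hrx)

end InfiniteProduct

theorem gaussian_exponent_add (κ a b t : ℝ) (ha : a ^ 2 ≠ 1) :
    κ / 4 * (t ^ 2 - (a * t) ^ 2 - (b * t) ^ 2) + (a * t) ^ 2 / 4 * κ * (1 - b ^ 2 / (1 - a ^ 2))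
      = t ^ 2 / 4 * κ * (1 - b ^ 2 / (1 - a ^ 2)) := by
  have : 1 - a ^ 2 ≠ 0 := sub_ne_zero.mpr (Ne.symm ha)
  field_simp
  ring

theorem one_step_stationarity_general (g z w c : ℂ) (hc : ‖c‖ = 1)
    (hgz : ‖(g * z)‖ < 1)
    (κ : ℝ)
    (F₁ D : ℂ → ℂ)
    (hD : ∀ θ : ℂ, Filter.Tendsto
      (fun n : ℕ => ∏ s ∈ Finset.range n, F₁ ((g * z) ^ s * θ))
      Filter.atTop (nhds (D θ)))
    (Estar : ℂ → ℂ)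
    (hEstar : ∀ θ : ℂ, Estar θ
      = Complex.exp (-((‖θ‖ ^ 2 / 4) * κ
          * (1 - ‖(g * w)‖ ^ 2 / (1 - ‖(g * z)‖ ^ 2)) : ℝ))
        * D (g * w * θ))
    (θ : ℂ) :
    Complex.exp (-((κ / 4) * (‖θ‖ ^ 2
        - ‖(g * z * θ)‖ ^ 2 - ‖(g * w * θ)‖ ^ 2) : ℝ))
      * Estar (c * g * z * θ) * F₁ (c * g * w * θ)
    = Estar (Complex.exp (Complex.I * (Complex.arg c : ℝ)) * θ) := by
  have hphase : Complex.exp (Complex.I * (Complex.arg c : ℝ)) = c := by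
    simpa [hc, mul_comm] using Complex.norm_mul_exp_arg_mul_I c
  have hrec : D (g * w * (c * θ)) = F₁ (c * g * w * θ) * D (g * w * (c * g * z * θ)) := by
    convert eq_mul_of_tendsto_prod_range_pow_mul (hD _) (hD _) using 3 <;> ring
  have hgz_sq : ‖g * z‖ ^ 2 ≠ 1 := by
    have := norm_nonneg (g * z)
    nlinarith
  have hexp := gaussian_exponent_add κ ‖g * z‖ ‖g * w‖ ‖θ‖ hgz_sq
  rw [← norm_mul, ← norm_mul] at hexp
  have hq : ‖c * g * z * θ‖ = ‖g * z * θ‖ := by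
    rw [mul_assoc, mul_assoc, norm_mul, hc, one_mul, ← mul_assoc]
  rw [hphase, hEstar, hEstar, hrec, hq, norm_mul c θ, hc, one_mul, ← hexp]
  push_cast
  rw [neg_add, Complex.exp_add]
  ring

/-- one-step stationarity of the limiting characteristic function
`E_*(θ) = exp[−(|θ|²/4)κ(1 − |gw|²/(1−|gz|²))]·D(gwθ)` for the repeated
interaction system, where `q = cgz`, `p = cgw`, `|c| = 1`, `|gz| < 1`,
`κ = (σ₋+σ₊)/(σ₋−σ₊)`, and `F₁` is rotation invariant with convergent product
`D(θ) = ∏_{s≥0} F₁((gz)^s θ)`. -/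
theorem one_step_stationarity (g z w c : ℂ) (hc : ‖c‖ = 1)
    (hgz : ‖(g * z)‖ < 1)
    (σp σm : ℝ) (hσ : 0 ≤ σp) (hσσ : σp < σm)
    (κ : ℝ) (hκ : κ = (σm + σp) / (σm - σp))
    (F₁ D : ℂ → ℂ)
    (hrot : ∀ (φ : ℝ) (θ : ℂ), F₁ (Complex.exp (Complex.I * φ) * θ) = F₁ θ)
    (hD : ∀ θ : ℂ, Filter.Tendsto
      (fun n : ℕ => ∏ s ∈ Finset.range n, F₁ ((g * z) ^ s * θ))
      Filter.atTop (nhds (D θ)))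
    (Estar : ℂ → ℂ)
    (hEstar : ∀ θ : ℂ, Estar θ
      = Complex.exp (-((‖θ‖ ^ 2 / 4) * κ
          * (1 - ‖(g * w)‖ ^ 2 / (1 - ‖(g * z)‖ ^ 2)) : ℝ))
        * D (g * w * θ))
    (θ : ℂ) :
    Complex.exp (-((κ / 4) * (‖θ‖ ^ 2
        - ‖(g * z * θ)‖ ^ 2 - ‖(g * w * θ)‖ ^ 2) : ℝ))
      * Estar (c * g * z * θ) * F₁ (c * g * w * θ)
    = Estar (Complex.exp (Complex.I * (Complex.arg c : ℝ)) * θ) :=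
  one_step_stationarity_general g z w c hc hgz κ F₁ D hD Estar hEstar θ
end

section
/- Convergence of the N-step characteristic function: under |gz| < 1 and convergence of D(θ) = ∏_{s=0}^∞ F₁((gz)^s θ), and assuming F₀, F₁ are rotation-invariant characteristic-type functions with F₀ continuous at 0 and F₀(0)=1, the sequence E_N(θ) := exp[−(|θ|²κ/4)(1−|gz|^{2N})(1−|gw|²/(1−|gz|²))] · F₀((gz)^N θ) · ∏_{k=1}^N F₁(g w (gz)^{N-k} θ) converges pointwise as N → ∞ to E_*(θ) = exp[−(|θ|²κ/4)(1−|gw|²/(1−|gz|²))]·D(gwθ). -/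
/-!
Each of the three factors of `E_N(θ)` converges separately. Since `|gz| < 1`, the Gaussian
prefactor loses its `|gz|^{2N}` correction and `F₀((gz)^N θ) → F₀(0) = 1` by continuity at `0`.
Reversing the order of the product, `∏_{k=1}^N F₁(gw (gz)^{N-k} θ) = ∏_{s<N} F₁((gz)^s · gwθ)`
is a partial product of `D(gwθ)`.
-/

open Filter Topology Finset

theorem Finset.prod_Icc_one_tsub_eq_prod_range {M : Type*} [CommMonoid M] (f : ℕ → M) (n : ℕ) :
    ∏ k ∈ Icc 1 n, f (n - k) = ∏ s ∈ range n, f s := by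
  rw [← Ico_add_one_right_eq_Icc, prod_Ico_reflect f 1 le_rfl, range_eq_Ico]
  simp

theorem ContinuousAt.tendsto_comp_pow_mul {R X : Type*} [SeminormedRing R] [TopologicalSpace X]
    {f : R → X} (hf : ContinuousAt f 0) {q : R} (hq : ‖q‖ < 1) (θ : R) :
    Tendsto (fun n : ℕ => f (q ^ n * θ)) atTop (𝓝 (f 0)) := by
  have h : Tendsto (fun n : ℕ => q ^ n * θ) atTop (𝓝 0) := by
    simpa using (tendsto_pow_atTop_nhds_zero_of_norm_lt_one hq).mul_const θ
  exact hf.tendsto.comp h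

theorem tendsto_pow_two_mul_atTop_nhds_zero {r : ℝ} (h₀ : 0 ≤ r) (h₁ : r < 1) :
    Tendsto (fun n : ℕ => r ^ (2 * n)) atTop (𝓝 0) := by
  simp only [pow_mul]
  exact tendsto_pow_atTop_nhds_zero_of_lt_one (by positivity) (pow_lt_one₀ h₀ h₁ two_ne_zero)

theorem N_step_convergence_general (g z w : ℂ) (hgz : ‖g * z‖ < 1)
    (κ : ℝ)
    (F₀ F₁ D : ℂ → ℂ)
    (hF₀cont : ContinuousAt F₀ 0) (hF₀0 : F₀ 0 = 1)
    (hD : ∀ θ : ℂ, Filter.Tendsto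
      (fun n : ℕ => ∏ s ∈ Finset.range n, F₁ ((g * z) ^ s * θ))
      Filter.atTop (nhds (D θ)))
    (θ : ℂ) :
    Filter.Tendsto
      (fun N : ℕ =>
        Complex.exp (-(((‖θ‖) ^ 2 * κ / 4)
            * (1 - (‖g * z‖) ^ (2 * N))
            * (1 - (‖g * w‖) ^ 2 / (1 - (‖g * z‖) ^ 2)) : ℝ))
          * F₀ ((g * z) ^ N * θ)
          * ∏ k ∈ Finset.Icc 1 N, F₁ (g * w * (g * z) ^ (N - k) * θ))
      Filter.atTop
      (nhds (Complex.exp (-(((‖θ‖) ^ 2 * κ / 4)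
            * (1 - (‖g * w‖) ^ 2 / (1 - (‖g * z‖) ^ 2)) : ℝ))
          * D (g * w * θ))) := by
  set c : ℝ := ‖θ‖ ^ 2 * κ / 4
  set d : ℝ := 1 - ‖g * w‖ ^ 2 / (1 - ‖g * z‖ ^ 2)
  have h_gauss : Tendsto (fun N : ℕ => Complex.exp (-(c * (1 - ‖g * z‖ ^ (2 * N)) * d) : ℝ))
      atTop (𝓝 (Complex.exp (-(c * d) : ℝ))) := by
    have h := (tendsto_pow_two_mul_atTop_nhds_zero (norm_nonneg _) hgz).const_sub 1
    have hexp : Continuous fun x : ℝ => Complex.exp (-(c * x * d) : ℝ) := by fun_prop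
    simpa only [Function.comp_def, sub_zero, mul_one] using hexp.continuousAt.tendsto.comp h
  have h_init : Tendsto (fun N : ℕ => F₀ ((g * z) ^ N * θ)) atTop (𝓝 1) :=
    hF₀0 ▸ hF₀cont.tendsto_comp_pow_mul hgz θ
  have h_chain : Tendsto (fun N : ℕ => ∏ k ∈ Icc 1 N, F₁ (g * w * (g * z) ^ (N - k) * θ))
      atTop (𝓝 (D (g * w * θ))) := by
    refine (hD (g * w * θ)).congr fun N => ?_
    rw [← prod_Icc_one_tsub_eq_prod_range]
    exact prod_congr rfl fun k _ => by ring_nf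
  simpa using (h_gauss.mul h_init).mul h_chain

/-- pointwise convergence of the `N`-step characteristic function
`E_N(θ)` of the cavity to the limiting characteristic function
`E_*(θ) = exp[−(|θ|²κ/4)(1−|gw|²/(1−|gz|²))]·D(gwθ)`. -/
theorem N_step_convergence (g z w : ℂ) (hgz : ‖g * z‖ < 1)
    (κ : ℝ) (hκ : 0 < κ)
    (F₀ F₁ D : ℂ → ℂ)
    (hF₀cont : ContinuousAt F₀ 0) (hF₀0 : F₀ 0 = 1)
    (hF₀bd : ∀ θ : ℂ, ‖F₀ θ‖ ≤ 1)
    (hF₁bd : ∀ θ : ℂ, ‖F₁ θ‖ ≤ 1)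
    (hrot₀ : ∀ (φ : ℝ) (θ : ℂ), F₀ (Complex.exp (Complex.I * φ) * θ) = F₀ θ)
    (hrot₁ : ∀ (φ : ℝ) (θ : ℂ), F₁ (Complex.exp (Complex.I * φ) * θ) = F₁ θ)
    (hD : ∀ θ : ℂ, Filter.Tendsto
      (fun n : ℕ => ∏ s ∈ Finset.range n, F₁ ((g * z) ^ s * θ))
      Filter.atTop (nhds (D θ)))
    (θ : ℂ) :
    Filter.Tendsto
      (fun N : ℕ =>
        Complex.exp (-(((‖θ‖) ^ 2 * κ / 4)
            * (1 - (‖g * z‖) ^ (2 * N))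
            * (1 - (‖g * w‖) ^ 2 / (1 - (‖g * z‖) ^ 2)) : ℝ))
          * F₀ ((g * z) ^ N * θ)
          * ∏ k ∈ Finset.Icc 1 N, F₁ (g * w * (g * z) ^ (N - k) * θ))
      Filter.atTop
      (nhds (Complex.exp (-(((‖θ‖) ^ 2 * κ / 4)
            * (1 - (‖g * w‖) ^ 2 / (1 - (‖g * z‖) ^ 2)) : ℝ))
          * D (g * w * θ))) :=
  N_step_convergence_general g z w hgz κ F₀ F₁ D hF₀cont hF₀0 hD θ
end
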